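/- Let A ∈ ℚ^{k×k}, v ∈ ℚ^k, and let s ∈ ℚ^{k+1} be a vector with all entries strictly positive and summing to 1. Then there exist a (k+1)×(k+1) column-stochastic rational matrix M with all entries strictly positive and a vector μ ∈ ℚ^{k+1} with nonnegative entries summing to 1 such that: for every set T ⊆ ℝ^k that is invariant under positive scaling (i.e. for all λ > 0 and all x ∈ ℝ^k, x ∈ T if and only if λx ∈ T) and for every n ≥ 0, we have M^n μ ∈ {s + Qx : x ∈ T} if and only if A^n v ∈ T, where Q is the (k+1)×k matrix whose top k×k block is the identity and whose last row is −1^⊤. -/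

import Mathlib

/-!
The affine map `x ↦ s + Q x` identifies `ℚ^k` with the hyperplane `∑ i, y i = 1`, and `Q` has a
left inverse `P` with `P s = 0`. The matrix `M = s 1ᵀ + γ Q A P` is then column-stochastic, sends
`s + c Q x` to `s + γ c Q (A x)`, and is strictly positive once `γ > 0` is small enough. Taking
`μ = s + ε Q v` gives `Mⁿ μ = s + ε γⁿ Q (Aⁿ v)`; as `Q` is injective and `T` is a cone,
`Mⁿ μ ∈ s + Q T` exactly when `Aⁿ v ∈ T`.
-/

open Matrix Filter Topology

/-- The `(k+1) × k` rational matrix whose top `k × k` block is the identity and whose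
last row is `-1ᵀ`. -/
def Qmat (k : ℕ) : Matrix (Fin (k + 1)) (Fin k) ℚ :=
  Matrix.of fun i j => if (i : ℕ) = (j : ℕ) then 1 else if (i : ℕ) = k then -1 else 0

theorem exists_pos_forall_pos_add_mul {𝕜 ι : Type*} [Field 𝕜] [LinearOrder 𝕜]
    [IsStrictOrderedRing 𝕜] [TopologicalSpace 𝕜] [OrderTopology 𝕜] [Finite ι]
    {s : ι → 𝕜} (hs : ∀ i, 0 < s i) (d : ι → 𝕜) :
    ∃ ε > 0, ∀ i, 0 < s i + ε * d i := by
  have hnear : ∀ᶠ ε in 𝓝 (0 : 𝕜), ∀ i, 0 < s i + ε * d i := by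
    refine eventually_all.2 fun i => ?_
    have hcont : ContinuousAt (fun ε : 𝕜 => s i + ε * d i) 0 := by fun_prop
    exact hcont.eventually (lt_mem_nhds (by simpa using hs i))
  obtain ⟨ε, hε, hεpos⟩ :=
    ((hnear.filter_mono nhdsWithin_le_nhds).and (eventually_mem_nhdsWithin (s := Set.Ioi 0))).exists
  exact ⟨ε, hεpos, hε⟩

section Iterate

variable {R m n : Type*} [CommRing R] [Fintype m] [Fintype n] [DecidableEq m] [DecidableEq n]

theorem pow_mulVec_add_smul_mulVec {M : Matrix m m R} {A : Matrix n n R} {Q : Matrix m n R}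
    {s : m → R} {γ : R}
    (hM : ∀ (c : R) (x : n → R), M *ᵥ (s + c • Q *ᵥ x) = s + (γ * c) • Q *ᵥ (A *ᵥ x))
    (N : ℕ) (c : R) (x : n → R) :
    (M ^ N) *ᵥ (s + c • Q *ᵥ x) = s + (γ ^ N * c) • Q *ᵥ ((A ^ N) *ᵥ x) := by
  induction N generalizing c x with
  | zero => simp
  | succ N ih =>
    rw [pow_succ, ← mulVec_mulVec, hM, ih, pow_succ γ, pow_succ A, ← mulVec_mulVec, mul_assoc]

end Iterate

section Qmat

variable {k : ℕ}

theorem Qmat_castSucc_apply (j j' : Fin k) :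
    Qmat k j.castSucc j' = if j' = j then 1 else 0 := by
  simp [Qmat, Fin.val_eq_val, eq_comm, j.isLt.ne']

theorem Qmat_last_apply (j : Fin k) : Qmat k (Fin.last k) j = -1 := by
  simp [Qmat, j.isLt.ne']

theorem sum_Qmat_mulVec (x : Fin k → ℚ) : ∑ i, (Qmat k *ᵥ x) i = 0 := by
  simp [Fin.sum_univ_castSucc, mulVec, dotProduct, Qmat_castSucc_apply, Qmat_last_apply]

theorem Qmat_map_mulVec_castSucc {R : Type*} [DivisionRing R] [CharZero R] (x : Fin k → R)
    (j : Fin k) : ((Qmat k).map (fun q : ℚ => (q : R)) *ᵥ x) j.castSucc = x j := by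
  simp [mulVec, dotProduct, Qmat_castSucc_apply, apply_ite (fun q : ℚ => (q : R))]

theorem Qmat_mulVec_castSucc (x : Fin k → ℚ) (j : Fin k) :
    (Qmat k *ᵥ x) j.castSucc = x j := by
  simpa using Qmat_map_mulVec_castSucc x j

theorem Qmat_map_mulVec_injective {R : Type*} [DivisionRing R] [CharZero R] :
    Function.Injective ((Qmat k).map (fun q : ℚ => (q : R)) *ᵥ ·) := fun x y hxy =>
  funext fun j => by
    simpa [Qmat_map_mulVec_castSucc] using congrFun hxy j.castSucc

def Qmat.leftInverse (s : Fin (k + 1) → ℚ) : Matrix (Fin k) (Fin (k + 1)) ℚ :=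
  of fun j i => (if i = j.castSucc then 1 else 0) - s j.castSucc

theorem Qmat.leftInverse_mulVec (s y : Fin (k + 1) → ℚ) :
    Qmat.leftInverse s *ᵥ y = fun j => y j.castSucc - s j.castSucc * ∑ i, y i := by
  ext j
  simp [Qmat.leftInverse, mulVec, dotProduct, sub_mul, Finset.sum_sub_distrib, ite_mul,
    Finset.mul_sum]

end Qmat

section Simulation

variable {k : ℕ} {s : Fin (k + 1) → ℚ}

theorem Qmat.leftInverse_mulVec_add_smul (hs : ∑ i, s i = 1) (c : ℚ) (x : Fin k → ℚ) :
    Qmat.leftInverse s *ᵥ (s + c • Qmat k *ᵥ x) = c • x := by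
  ext j
  simp [Qmat.leftInverse_mulVec, Finset.sum_add_distrib, ← Finset.mul_sum, hs,
    sum_Qmat_mulVec, Qmat_mulVec_castSucc]

def simulatingMatrix (s : Fin (k + 1) → ℚ) (A : Matrix (Fin k) (Fin k) ℚ) (γ : ℚ) :
    Matrix (Fin (k + 1)) (Fin (k + 1)) ℚ :=
  of (fun i _ => s i) + γ • (Qmat k * A * Qmat.leftInverse s)

theorem simulatingMatrix_mulVec (hs : ∑ i, s i = 1) (A : Matrix (Fin k) (Fin k) ℚ)
    (γ c : ℚ) (x : Fin k → ℚ) :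
    simulatingMatrix s A γ *ᵥ (s + c • Qmat k *ᵥ x) = s + (γ * c) • Qmat k *ᵥ (A *ᵥ x) := by
  have hsum : ∑ i, (s + c • Qmat k *ᵥ x) i = 1 := by
    simp [Finset.sum_add_distrib, hs, ← Finset.mul_sum, sum_Qmat_mulVec]
  have hconst : of (fun i (_ : Fin (k + 1)) => s i) *ᵥ (s + c • Qmat k *ᵥ x) = s := by
    ext i
    simp only [mulVec, dotProduct, of_apply, ← Finset.mul_sum, hsum, mul_one]
  rw [simulatingMatrix, add_mulVec, smul_mulVec, hconst, ← mulVec_mulVec,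
    Qmat.leftInverse_mulVec_add_smul hs, ← mulVec_mulVec, mulVec_smul, mulVec_smul, smul_smul]

theorem sum_simulatingMatrix_apply (hs : ∑ i, s i = 1) (A : Matrix (Fin k) (Fin k) ℚ)
    (γ : ℚ) (j : Fin (k + 1)) : ∑ i, simulatingMatrix s A γ i j = 1 := by
  have hQ : ∑ i, (Qmat k * (A * Qmat.leftInverse s)) i j = 0 :=
    sum_Qmat_mulVec fun l => (A * Qmat.leftInverse s) l j
  simp [simulatingMatrix, Finset.sum_add_distrib, hs, ← Finset.mul_sum, Matrix.mul_assoc, hQ]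

end Simulation

theorem cast_add_smul_Qmat_mulVec_mem_iff {k : ℕ} {T : Set (Fin k → ℝ)}
    (hT : ∀ lam : ℝ, 0 < lam → ∀ x : Fin k → ℝ, x ∈ T ↔ lam • x ∈ T)
    (s : Fin (k + 1) → ℚ) {c : ℚ} (hc : 0 < c) (u : Fin k → ℚ) :
    (fun i => ((s + c • Qmat k *ᵥ u) i : ℝ)) ∈
        {y : Fin (k + 1) → ℝ | ∃ x ∈ T,
          y = (fun i => (s i : ℝ)) + ((Qmat k).map (fun q => (q : ℝ))) *ᵥ x}
      ↔ (fun i => (u i : ℝ)) ∈ T := by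
  have hcast : (fun i => ((s + c • Qmat k *ᵥ u) i : ℝ)) = (fun i => (s i : ℝ)) +
      ((Qmat k).map (fun q => (q : ℝ))) *ᵥ ((c : ℝ) • fun i => (u i : ℝ)) := by
    ext i
    have hmap := (Rat.castHom ℝ).map_mulVec (Qmat k) u i
    simp only [Rat.coe_castHom] at hmap
    simp [mulVec_smul, hmap, Function.comp_def]
  rw [hcast, hT c (mod_cast hc)]
  constructor
  · rintro ⟨x, hx, hxeq⟩
    rwa [Qmat_map_mulVec_injective (add_left_cancel hxeq)]
  · exact fun hu => ⟨_, hu, rfl⟩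

/-- Let `A ∈ ℚ^(k×k)`, `v ∈ ℚ^k`, and let `s ∈ ℚ^(k+1)` have strictly positive entries
summing to `1`. Then there are a column-stochastic rational matrix `M` with strictly
positive entries and a distribution `μ ∈ ℚ^(k+1)` such that for every set `T ⊆ ℝ^k`
invariant under positive scaling and every `n ≥ 0`:
`M^n μ ∈ {s + Q x : x ∈ T}` iff `A^n v ∈ T`, where `Q` has identity top block and last
row `-1ᵀ`. -/
theorem stmt15 {k : ℕ} (A : Matrix (Fin k) (Fin k) ℚ) (v : Fin k → ℚ)
    (s : Fin (k + 1) → ℚ) (hspos : ∀ i, 0 < s i) (hssum : ∑ i, s i = 1) :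
    ∃ (M : Matrix (Fin (k + 1)) (Fin (k + 1)) ℚ) (μ : Fin (k + 1) → ℚ),
      (∀ i j, 0 < M i j) ∧ (∀ j, ∑ i, M i j = 1) ∧
      (∀ i, 0 ≤ μ i) ∧ (∑ i, μ i = 1) ∧
      ∀ T : Set (Fin k → ℝ),
        (∀ lam : ℝ, 0 < lam → ∀ x : Fin k → ℝ, x ∈ T ↔ lam • x ∈ T) →
        ∀ n : ℕ,
          ((fun i => (((M ^ n).mulVec μ) i : ℝ)) ∈
              {y : Fin (k + 1) → ℝ | ∃ x ∈ T,
                y = (fun i => (s i : ℝ)) +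
                  ((Qmat k).map (fun q => (q : ℝ))).mulVec x})
            ↔ (fun i => (((A ^ n).mulVec v) i : ℝ)) ∈ T := by
  obtain ⟨γ, hγ, hMpos⟩ := exists_pos_forall_pos_add_mul
    (s := fun p : Fin (k + 1) × Fin (k + 1) => s p.1) (fun p => hspos p.1)
    fun p => (Qmat k * A * Qmat.leftInverse s) p.1 p.2
  obtain ⟨ε, hε, hμpos⟩ := exists_pos_forall_pos_add_mul hspos (Qmat k *ᵥ v)
  refine ⟨simulatingMatrix s A γ, s + ε • Qmat k *ᵥ v, fun i j => ?_,
    sum_simulatingMatrix_apply hssum A γ, fun i => (hμpos i).le, ?_, fun T hT n => ?_⟩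
  · simpa [simulatingMatrix] using hMpos (i, j)
  · simp [Finset.sum_add_distrib, hssum, ← Finset.mul_sum, sum_Qmat_mulVec]
  · rw [pow_mulVec_add_smul_mulVec (simulatingMatrix_mulVec hssum A γ)]
    exact cast_add_smul_Qmat_mulVec_mem_iff hT s (by positivity) _
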